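/- Let A_1 = [[0,1],[1,0]] and recursively A_n = [[A_{n−1}, I], [I, −A_{n−1}]] (a 2^n × 2^n matrix). Then A_n equals the matrix of right multiplication by S = e_1 + ⋯ + e_n on Cl(n) with respect to the basis {e_I : I ⊆ {1,…,n}} ordered lexicographically (identifying I with its indicator vector in {0,1}^n). -/

import Mathlib

open scoped BigOperators

/-- `Cl n`: the real Clifford algebra of the standard positive definite quadratic form on `ℝⁿ`. -/
noncomputable abbrev Cl (n : ℕ) : Type :=
  CliffordAlgebra (QuadraticMap.weightedSumSquares ℝ (fun _ : Fin n => (1 : ℝ)))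

/-- The orthonormal generators `e i` of `Cl n`, satisfying `e i ^ 2 = 1`, `e i * e j = - e j * e i`. -/
noncomputable def e (n : ℕ) (i : Fin n) : Cl n :=
  CliffordAlgebra.ι _ (Pi.single i 1)

/-- `S = e 1 + ⋯ + e n`. -/
noncomputable def S (n : ℕ) : Cl n := ∑ i, e n i


/-- The basis element of `Cl n` corresponding to a vertex `v ∈ {0,1}ⁿ`:
the product of the `e i` with `v i = true`, in increasing order of `i`. -/
noncomputable def eVert (n : ℕ) (v : Fin n → Bool) : Cl n :=
  (((List.finRange n).filter (fun i => v i)).map (e n)).prod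


/-- Huang's matrix sequence: `A 0` is the `1×1` zero matrix, and
`A (n+1) = [[A n, I], [I, -A n]]` in block form (so `A 1 = [[0,1],[1,0]]`). -/
noncomputable def A : (n : ℕ) → Matrix (Fin (2 ^ n)) (Fin (2 ^ n)) ℝ
  | 0 => 0
  | (n + 1) =>
    Matrix.reindex (finSumFinEquiv.trans (finCongr (by rw [pow_succ]; ring)))
      (finSumFinEquiv.trans (finCongr (by rw [pow_succ]; ring)))
      (Matrix.fromBlocks (A n) 1 1 (-(A n)))


/-- The vertex of `{0,1}ⁿ` corresponding to `k ∈ Fin 2ⁿ` under the lexicographic ordering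
(identifying a subset `I ⊆ {1,…,n}` with its indicator vector, coordinate `i` being the
`i`-th binary digit of `k`). -/
def vtx (n : ℕ) (k : Fin (2 ^ n)) : Fin n → Bool := fun i => Nat.testBit k i

/-! ### Auxiliary development -/

section Aux

/-- The linear map `ℝⁿ → ℝⁿ⁺¹` extending by a zero last coordinate. -/
noncomputable def snocLin (n : ℕ) : (Fin n → ℝ) →ₗ[ℝ] (Fin (n + 1) → ℝ) where
  toFun v := Fin.snoc v 0
  map_add' v w := by
    funext i
    refine Fin.lastCases ?_ (fun k => ?_) i <;> simp
  map_smul' c v := by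
    funext i
    refine Fin.lastCases ?_ (fun k => ?_) i <;> simp

lemma Q_snoc (n : ℕ) (v : Fin n → ℝ) :
    QuadraticMap.weightedSumSquares ℝ (fun _ : Fin (n + 1) => (1 : ℝ)) (Fin.snoc v 0) =
      QuadraticMap.weightedSumSquares ℝ (fun _ : Fin n => (1 : ℝ)) v := by
  simp [QuadraticMap.weightedSumSquares_apply, Fin.sum_univ_castSucc]

/-- The canonical algebra embedding `Cl n → Cl (n+1)`. -/
noncomputable def incl (n : ℕ) : Cl n →ₐ[ℝ] Cl (n + 1) :=
  CliffordAlgebra.lift _ ⟨(CliffordAlgebra.ι _).comp (snocLin n), fun v => by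
    rw [LinearMap.comp_apply, CliffordAlgebra.ι_sq_scalar]
    congr 1
    exact Q_snoc n v⟩

lemma snoc_single (n : ℕ) (i : Fin n) :
    (Fin.snoc (Pi.single i (1 : ℝ)) 0 : Fin (n + 1) → ℝ) = Pi.single i.castSucc 1 := by
  funext k
  refine Fin.lastCases ?_ (fun k => ?_) k
  · simp [Pi.single_apply, (Fin.castSucc_lt_last i).ne']
  · simp [Pi.single_apply, Fin.castSucc_inj]

lemma incl_e (n : ℕ) (i : Fin n) : incl n (e n i) = e (n + 1) i.castSucc := by
  rw [incl, e, CliffordAlgebra.lift_ι_apply, LinearMap.comp_apply]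
  have h : (snocLin n) (Pi.single i (1 : ℝ)) = Pi.single i.castSucc 1 := snoc_single n i
  rw [h, e]

lemma Q_single (n : ℕ) (i : Fin n) :
    QuadraticMap.weightedSumSquares ℝ (fun _ : Fin n => (1 : ℝ)) (Pi.single i 1) = 1 := by
  simp [QuadraticMap.weightedSumSquares_apply, Pi.single_apply]

lemma e_sq (n : ℕ) (i : Fin n) : e n i * e n i = 1 := by
  rw [e, CliffordAlgebra.ι_sq_scalar, Q_single, map_one]

lemma ortho_single (n : ℕ) {i j : Fin n} (h : i ≠ j) :
    (QuadraticMap.weightedSumSquares ℝ (fun _ : Fin n => (1 : ℝ))).IsOrtho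
      (Pi.single i 1) (Pi.single j 1) := by
  simp only [QuadraticMap.isOrtho_def, QuadraticMap.weightedSumSquares_apply, one_smul,
    Pi.add_apply, Pi.single_apply, Q_single]
  rw [← Finset.sum_add_distrib]
  refine Finset.sum_congr rfl fun k _ => ?_
  by_cases hk : k = i <;> by_cases hk' : k = j <;> simp_all

lemma e_anticomm (n : ℕ) {i j : Fin n} (h : i ≠ j) :
    e n i * e n j = -(e n j * e n i) :=
  CliffordAlgebra.ι_mul_ι_comm_of_isOrtho (ortho_single n h)

lemma finRange_succ_snoc (n : ℕ) :
    List.finRange (n + 1) = (List.finRange n).map Fin.castSucc ++ [Fin.last n] := by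
  induction n with
  | zero => rfl
  | succ n ih =>
    rw [List.finRange_succ]
    conv_lhs => rw [ih]
    rw [List.finRange_succ]
    simp [List.map_map, Function.comp_def, Fin.succ_castSucc, Fin.succ_last, -Fin.castSucc_succ]

lemma eVert_snoc (n : ℕ) (v : Fin n → Bool) (b : Bool) :
    eVert (n + 1) (Fin.snoc v b) =
      incl n (eVert n v) * (if b then e (n + 1) (Fin.last n) else 1) := by
  rw [eVert, finRange_succ_snoc, List.filter_append, List.filter_map, List.map_append,
    List.prod_append]
  congr 1
  · have hp : ((fun i : Fin (n+1) => Fin.snoc v b i) ∘ Fin.castSucc) = fun i : Fin n => v i := by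
      funext i; simp
    rw [hp, List.map_map, eVert, map_list_prod, List.map_map]
    exact congrArg List.prod (List.map_congr_left fun i _ => (incl_e n i).symm)
  · cases b <;> simp [List.filter]

lemma eVert_snoc_false (n : ℕ) (v : Fin n → Bool) :
    eVert (n + 1) (Fin.snoc v false) = incl n (eVert n v) := by
  rw [eVert_snoc]; simp

lemma eVert_snoc_true (n : ℕ) (v : Fin n → Bool) :
    eVert (n + 1) (Fin.snoc v true) = incl n (eVert n v) * e (n + 1) (Fin.last n) := by
  rw [eVert_snoc]; simp

/-- The block-structure equivalence used in the definition of `A`. -/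
def EE (n : ℕ) : Fin (2 ^ n) ⊕ Fin (2 ^ n) ≃ Fin (2 ^ (n + 1)) :=
  finSumFinEquiv.trans (finCongr (by rw [pow_succ]; ring))

lemma EE_inl_val (n : ℕ) (i : Fin (2 ^ n)) : ((EE n (Sum.inl i) : Fin (2 ^ (n+1))) : ℕ) = i := by
  simp [EE]

lemma EE_inr_val (n : ℕ) (i : Fin (2 ^ n)) :
    ((EE n (Sum.inr i) : Fin (2 ^ (n+1))) : ℕ) = 2 ^ n + i := by
  simp [EE]; omega

lemma A_succ_apply (n : ℕ) (s t : Fin (2 ^ n) ⊕ Fin (2 ^ n)) :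
    A (n + 1) (EE n s) (EE n t) =
      Matrix.fromBlocks (A n) 1 1 (-(A n)) s t := by
  show Matrix.reindex (EE n) (EE n) (Matrix.fromBlocks (A n) 1 1 (-(A n))) (EE n s) (EE n t) = _
  simp

lemma vtx_low (n : ℕ) (j : Fin (2 ^ n)) :
    vtx (n + 1) (EE n (Sum.inl j)) = Fin.snoc (vtx n j) false := by
  funext i
  refine Fin.lastCases ?_ (fun k => ?_) i
  · simp only [vtx, EE_inl_val, Fin.snoc_last]
    exact Nat.testBit_lt_two_pow j.isLt
  · simp only [vtx, EE_inl_val, Fin.snoc_castSucc]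
    rfl

lemma vtx_high (n : ℕ) (j : Fin (2 ^ n)) :
    vtx (n + 1) (EE n (Sum.inr j)) = Fin.snoc (vtx n j) true := by
  funext i
  refine Fin.lastCases ?_ (fun k => ?_) i
  · simp only [vtx, EE_inr_val, Fin.snoc_last, Fin.val_last]
    rw [Nat.testBit_two_pow_add_eq, Nat.testBit_lt_two_pow j.isLt]
    rfl
  · simp only [vtx, EE_inr_val, Fin.snoc_castSucc, Fin.coe_castSucc]
    rw [Nat.testBit_two_pow_add_gt k.isLt]

lemma incl_S (n : ℕ) : incl n (S n) = ∑ i : Fin n, e (n + 1) i.castSucc := by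
  rw [S, map_sum]
  exact Finset.sum_congr rfl fun i _ => incl_e n i

lemma S_succ (n : ℕ) : S (n + 1) = incl n (S n) + e (n + 1) (Fin.last n) := by
  rw [incl_S, S, Fin.sum_univ_castSucc]

lemma last_anticomm_inclS (n : ℕ) :
    e (n + 1) (Fin.last n) * incl n (S n) = -(incl n (S n) * e (n + 1) (Fin.last n)) := by
  rw [incl_S, Finset.mul_sum, Finset.sum_mul, ← Finset.sum_neg_distrib]
  exact Finset.sum_congr rfl fun i _ =>
    e_anticomm (n + 1) (Fin.castSucc_lt_last i).ne'

end Aux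

/-- Huang's matrix `A n` is the matrix of right multiplication by `S = e₁ + ⋯ + eₙ` on `Cl n`
with respect to the standard basis `{e_I}` ordered lexicographically: the image of the `j`-th
basis vector is `Σ_i (A n) i j • (i-th basis vector)`. -/
theorem huang_matrix_is_right_mul_S (n : ℕ) (j : Fin (2 ^ n)) :
    eVert n (vtx n j) * S n = ∑ i, A n i j • eVert n (vtx n i) := by
  induction n with
  | zero => simp [S, A]
  | succ n ih =>
    obtain ⟨s, rfl⟩ := (EE n).surjective j
    rw [← Equiv.sum_comp (EE n) (fun i => A (n + 1) i (EE n s) • eVert (n + 1) (vtx (n + 1) i)),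
      Fintype.sum_sum_type]
    simp only [A_succ_apply, vtx_low, vtx_high, eVert_snoc_false, eVert_snoc_true, S_succ]
    cases s with
    | inl j' =>
      simp only [Matrix.fromBlocks_apply₁₁, Matrix.fromBlocks_apply₂₁, vtx_low,
        eVert_snoc_false]
      rw [mul_add, ← map_mul, ih j', map_sum]
      simp only [map_smul]
      congr 1
      simp [Matrix.one_apply, ite_smul, Finset.sum_ite_eq']
    | inr j' =>
      simp only [Matrix.fromBlocks_apply₁₂, Matrix.fromBlocks_apply₂₂, vtx_high,
        eVert_snoc_true]
      rw [mul_add]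
      have ht : incl n (eVert n (vtx n j')) * e (n + 1) (Fin.last n) * e (n + 1) (Fin.last n) =
          incl n (eVert n (vtx n j')) := by
        rw [mul_assoc, e_sq, mul_one]
      have hb : incl n (eVert n (vtx n j')) * e (n + 1) (Fin.last n) * incl n (S n) =
          -(incl n (eVert n (vtx n j')) * incl n (S n) * e (n + 1) (Fin.last n)) := by
        rw [mul_assoc, last_anticomm_inclS, mul_neg, ← mul_assoc]
      rw [ht, hb, ← map_mul, ih j', map_sum]
      simp only [map_smul, Finset.sum_mul, smul_mul_assoc]
      rw [← Finset.sum_neg_distrib]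
      have hs : ∑ x : Fin (2 ^ n), (1 : Matrix (Fin (2 ^ n)) (Fin (2 ^ n)) ℝ) x j' •
          incl n (eVert n (vtx n x)) = incl n (eVert n (vtx n j')) := by
        simp [Matrix.one_apply, ite_smul, Finset.sum_ite_eq']
      have hs2 : ∑ x : Fin (2 ^ n),
          (-A n) x j' • (incl n (eVert n (vtx n x)) * e (n + 1) (Fin.last n)) =
          ∑ x : Fin (2 ^ n),
          -(A n x j' • (incl n (eVert n (vtx n x)) * e (n + 1) (Fin.last n))) :=
        Finset.sum_congr rfl fun i _ => by rw [Matrix.neg_apply, neg_smul]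
      rw [hs, hs2]; exact add_comm _ _
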